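/- arXiv:2203.13440 — 2 statements merged into one kernel-verified Lean document; each statement's English description precedes it below -/
import Mathlib

section
/- Let (X,T) be a transitive system and n ≥ 2. If there exists an essential n-sensitive distal tuple (x₁,…,xₙ), then there exists an essential n-sensitive tuple which is a minimal point of (Xⁿ, T⁽ⁿ⁾). -/
open Filter Topology MeasureTheory

variable {X : Type} [MetricSpace X]

def orbit (T : X → X) (x : X) : Set X := Set.range fun n : ℕ => T^[n] x

def IsTransitiveSys (T : X → X) : Prop :=
  ∀ U V : Set X, IsOpen U → U.Nonempty → IsOpen V → V.Nonempty →
    {n : ℕ | (U ∩ T^[n] ⁻¹' V).Nonempty}.Infinite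

def MinimalPoint (T : X → X) (x : X) : Prop :=
  ∀ y ∈ closure (orbit T x), x ∈ closure (orbit T y)

def MinimalSys (T : X → X) : Prop := ∀ x : X, Dense (orbit T x)

def IsMinimalSubset (T : X → X) (M : Set X) : Prop :=
  M.Nonempty ∧ IsClosed M ∧ Set.MapsTo T M M ∧
    ∀ M' ⊆ M, M'.Nonempty → IsClosed M' → Set.MapsTo T M' M' → M' = M

noncomputable def ubd (F : Set ℕ) : ℝ :=
  Filter.limsup (fun N : ℕ => ⨆ m : ℕ, ((F ∩ Set.Ico m (m + N)).ncard : ℝ) / N) atTop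

noncomputable def lbd (F : Set ℕ) : ℝ :=
  Filter.liminf (fun N : ℕ => ⨅ m : ℕ, ((F ∩ Set.Ico m (m + N)).ncard : ℝ) / N) atTop

def Syndetic (F : Set ℕ) : Prop := ∃ N : ℕ, ∀ k : ℕ, ∃ j ∈ F, k ≤ j ∧ j ≤ k + N

def Thick (F : Set ℕ) : Prop := ∀ l : ℕ, ∃ m : ℕ, Set.Icc m (m + l) ⊆ F

def PiecewiseSyndetic (F : Set ℕ) : Prop := ∃ A B : Set ℕ, Thick A ∧ Syndetic B ∧ F = A ∩ B

def Fps : Set (Set ℕ) := {F | PiecewiseSyndetic F}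
def Fpubd : Set (Set ℕ) := {F | 0 < ubd F}
def Finf : Set (Set ℕ) := {F | F.Infinite}

def FursFamily (S : Set (Set ℕ)) : Prop := ∀ F₁ F₂ : Set ℕ, F₁ ⊆ F₂ → F₁ ∈ S → F₂ ∈ S

def FamRecurrent {Z : Type} [MetricSpace Z] (S : Set (Set ℕ)) (T : Z → Z) (x : Z) : Prop :=
  ∀ U : Set Z, IsOpen U → x ∈ U → {n : ℕ | T^[n] x ∈ U} ∈ S

def BrokenSensitive (T : X → X) (S : Set (Set ℕ)) (n : ℕ) : Prop :=
  ∃ δ > (0:ℝ), ∃ F₀ ∈ S, ∀ U : Set X, IsOpen U → U.Nonempty → ∀ l : ℕ,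
    ∃ x : Fin n → X, (∀ i, x i ∈ U) ∧ ∃ m : ℕ,
      ∀ k ∈ F₀ ∩ Set.Icc 1 l, ∀ i j : Fin n, i ≠ j →
        δ < dist (T^[m + k] (x i)) (T^[m + k] (x j))

def SensitiveTuple (T : X → X) {n : ℕ} (x : Fin n → X) : Prop :=
  ∀ U : Set X, IsOpen U → U.Nonempty →
    ∀ V : Fin n → Set X, (∀ i, IsOpen (V i) ∧ x i ∈ V i) →
      ∃ y : Fin n → X, (∀ i, y i ∈ U) ∧ ∃ m : ℕ, ∀ i, T^[m] (y i) ∈ V i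

def EssentialSensitiveTuple (T : X → X) {n : ℕ} (x : Fin n → X) : Prop :=
  Function.Injective x ∧ SensitiveTuple T x

def prodMap (T : X → X) (n : ℕ) : (Fin n → X) → Fin n → X := fun x i => T (x i)

def BlockilyThickly (T : X → X) (n : ℕ) : Prop :=
  ∃ δ > (0:ℝ), ∀ k : ℕ, ∀ U : Set X, IsOpen U → U.Nonempty →
    ∃ x : Fin n → X, (∀ i, x i ∈ U) ∧ ∃ m : ℕ, ∀ l ≤ k, ∀ i j : Fin n, i ≠ j →
      δ < dist (T^[m + l] (x i)) (T^[m + l] (x j))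

def WeaklyMixing (T : X → X) : Prop :=
  IsTransitiveSys (fun p : X × X => (T p.1, T p.2))

def TopologicallyErgodic (T : X → X) : Prop :=
  ∀ U V : Set X, IsOpen U → U.Nonempty → IsOpen V → V.Nonempty →
    Syndetic {m : ℕ | (T^[m] ⁻¹' U ∩ V).Nonempty}

def MeanEquicontinuous (T : X → X) : Prop :=
  ∀ ε > (0:ℝ), ∃ δ > (0:ℝ), ∀ x y : X, dist x y < δ →
    Filter.limsup (fun m : ℕ => (∑ k ∈ Finset.range m, dist (T^[k] x) (T^[k] y)) / m) atTop < ε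

def BanachProximal (T : X → X) (x y : X) : Prop :=
  ∀ ε > (0:ℝ), ubd {m : ℕ | ε ≤ dist (T^[m] x) (T^[m] y)} = 0

def EquicontinuousSys (T : X → X) : Prop :=
  ∀ ε > (0:ℝ), ∃ δ > (0:ℝ), ∀ x y : X, dist x y < δ → ∀ n : ℕ, dist (T^[n] x) (T^[n] y) < ε

noncomputable def measSupp {Z : Type} [MetricSpace Z] [MeasurableSpace Z] (T : Z → Z) : Set Z :=
  closure (⋃ μ ∈ {μ : Measure Z | IsProbabilityMeasure μ ∧
      ∀ s : Set Z, MeasurableSet s → μ (T ⁻¹' s) = μ s},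
    {x : Z | ∀ U : Set Z, IsOpen U → x ∈ U → 0 < μ U})
set_option linter.unusedSectionVars false

lemma mem_orbit_self (T : X → X) (x : X) : x ∈ orbit T x := ⟨0, rfl⟩

lemma orbit_mapsTo (T : X → X) (x : X) : Set.MapsTo T (orbit T x) (orbit T x) := by
  rintro _ ⟨m, rfl⟩
  exact ⟨m + 1, by simp [Function.iterate_succ_apply']⟩

lemma closure_orbit_mapsTo {T : X → X} (hT : Continuous T) (x : X) :
    Set.MapsTo T (closure (orbit T x)) (closure (orbit T x)) := by
  intro z hz
  have := image_closure_subset_closure_image (s := orbit T x) hT ⟨z, hz, rfl⟩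
  exact closure_mono ((orbit_mapsTo T x).image_subset) this

lemma orbit_subset_of_mapsTo {T : X → X} {M : Set X} (hM : IsClosed M)
    (hmaps : Set.MapsTo T M M) {y : X} (hy : y ∈ M) : closure (orbit T y) ⊆ M := by
  refine hM.closure_subset_iff.mpr ?_
  rintro _ ⟨m, rfl⟩
  induction m with
  | zero => exact hy
  | succ k ih =>
    simp only at ih ⊢
    rw [Function.iterate_succ_apply']; exact hmaps ih

lemma exists_minimalPoint {Z : Type} [MetricSpace Z] [CompactSpace Z]
    (f : Z → Z) (hf : Continuous f) (x : Z) :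
    ∃ y ∈ closure (orbit f x), MinimalPoint f y := by
  set M₀ := closure (orbit f x) with hM₀
  set S : Set (Set Z) := {M | M ⊆ M₀ ∧ M.Nonempty ∧ IsClosed M ∧ Set.MapsTo f M M} with hS
  have hM₀S : M₀ ∈ S :=
    ⟨le_refl _, ⟨x, subset_closure (mem_orbit_self f x)⟩, isClosed_closure,
      closure_orbit_mapsTo hf x⟩
  have hlb : ∀ c ⊆ S, IsChain (· ⊆ ·) c → c.Nonempty → ∃ lb ∈ S, ∀ s ∈ c, lb ⊆ s := by
    intro c hcS hchain hcne
    refine ⟨⋂₀ c, ⟨?_, ?_, ?_, ?_⟩, fun s hs => Set.sInter_subset_of_mem hs⟩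
    · obtain ⟨s, hs⟩ := hcne
      exact (Set.sInter_subset_of_mem hs).trans (hcS hs).1
    · have : Nonempty c := hcne.to_subtype
      have hdir : DirectedOn (· ⊇ ·) c := by
        intro a ha b hb
        rcases hchain.total ha hb with h | h
        exacts [⟨a, ha, le_refl _, h⟩, ⟨b, hb, h, le_refl _⟩]
      exact IsCompact.nonempty_sInter_of_directed_nonempty_isCompact_isClosed hdir
        (fun U hU => (hcS hU).2.1) (fun U hU => ((hcS hU).2.2.1).isCompact)
        (fun U hU => (hcS hU).2.2.1)
    · exact isClosed_sInter fun U hU => (hcS hU).2.2.1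
    · intro z hz
      exact fun U hU => (hcS hU).2.2.2 (hz U hU)
  obtain ⟨M, hMsub, hMmin⟩ := zorn_superset_nonempty S hlb M₀ hM₀S
  obtain ⟨hMM₀, ⟨y, hy⟩, hMcl, hMmap⟩ := hMmin.prop
  have key : ∀ z ∈ M, closure (orbit f z) = M := by
    intro z hz
    have hsub : closure (orbit f z) ⊆ M := orbit_subset_of_mapsTo hMcl hMmap hz
    have : closure (orbit f z) ∈ S :=
      ⟨hsub.trans hMM₀, ⟨z, subset_closure (mem_orbit_self f z)⟩, isClosed_closure,
        closure_orbit_mapsTo hf z⟩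
    exact hMmin.eq_of_subset this hsub
  refine ⟨y, hMM₀ hy, ?_⟩
  intro z hz
  rw [key y hy] at hz
  rw [key z hz]
  exact hy


lemma prodMap_iterate (T : X → X) (n : ℕ) (m : ℕ) (z : Fin n → X) :
    (prodMap T n)^[m] z = fun i => T^[m] (z i) := by
  induction m with
  | zero => rfl
  | succ k ih =>
    rw [Function.iterate_succ_apply', ih]
    funext i
    simp [prodMap, Function.iterate_succ_apply']

theorem stmt5 [CompactSpace X] (T : X → X) (hT : Continuous T) (hTs : Function.Surjective T)
    (htr : IsTransitiveSys T) (n : ℕ) (hn : 2 ≤ n)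
    (h : ∃ x : Fin n → X, EssentialSensitiveTuple T x ∧
      ∃ c > (0:ℝ), ∀ m : ℕ, ∀ i j : Fin n, i ≠ j →
        c ≤ dist (T^[m] (x i)) (T^[m] (x j))) :
    ∃ y : Fin n → X, EssentialSensitiveTuple T y ∧ MinimalPoint (prodMap T n) y := by
  obtain ⟨x, ⟨hinj, hsens⟩, c, hc, hdist⟩ := h
  have hf : Continuous (prodMap T n) := continuous_pi fun i => hT.comp (continuous_apply i)
  obtain ⟨y, hyc, hymin⟩ := exists_minimalPoint (prodMap T n) hf x
  have hCcl : IsClosed {z : Fin n → X | ∀ i j, i ≠ j → c ≤ dist (z i) (z j)} := by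
    have hEq : {z : Fin n → X | ∀ i j, i ≠ j → c ≤ dist (z i) (z j)} =
        ⋂ i, ⋂ j, ⋂ (_ : i ≠ j), {z : Fin n → X | c ≤ dist (z i) (z j)} := by
      ext z; simp [Set.mem_iInter]
    rw [hEq]
    exact isClosed_iInter fun i => isClosed_iInter fun j => isClosed_iInter fun _ =>
      isClosed_le continuous_const ((continuous_apply i).dist (continuous_apply j))
  have hsep : ∀ i j : Fin n, i ≠ j → c ≤ dist (y i) (y j) := by
    have horb : orbit (prodMap T n) x ⊆
        {z : Fin n → X | ∀ i j, i ≠ j → c ≤ dist (z i) (z j)} := by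
      rintro _ ⟨m, rfl⟩
      intro i j hij
      simp only [prodMap_iterate]
      exact hdist m i j hij
    exact (hCcl.closure_subset_iff.mpr horb) hyc
  refine ⟨y, ⟨?_, ?_⟩, hymin⟩
  · intro i j hij
    by_contra hne
    have := hsep i j hne
    rw [hij, dist_self] at this
    linarith
  · intro U hU hUne V hV
    have hW : IsOpen (Set.univ.pi V) := isOpen_set_pi Set.finite_univ fun i _ => (hV i).1
    have hyW : y ∈ Set.univ.pi V := fun i _ => (hV i).2
    obtain ⟨w, hwW, hworb⟩ := mem_closure_iff.mp hyc _ hW hyW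
    obtain ⟨m₀, rfl⟩ := hworb
    have hx₀ : ∀ i, T^[m₀] (x i) ∈ V i := by
      intro i
      have h2 : (prodMap T n)^[m₀] x ∈ Set.univ.pi V := hwW
      have h3 := h2 i (Set.mem_univ i)
      rwa [prodMap_iterate] at h3
    obtain ⟨z, hzU, m, hzm⟩ := hsens U hU hUne (fun i => T^[m₀] ⁻¹' (V i))
      (fun i => ⟨(hV i).1.preimage (hT.iterate m₀), hx₀ i⟩)
    refine ⟨z, hzU, m + m₀, fun i => ?_⟩
    have := hzm i
    rw [Set.mem_preimage] at this
    rwa [add_comm, Function.iterate_add_apply]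
end

section
/- Every non-minimal M-system (X,T) is broken F_ps-n-sensitive for every n ≥ 2. -/
open Filter Topology MeasureTheory

variable {X : Type} [MetricSpace X]

/-! A non-minimal M-system contains, for every `n`, `n` pairwise disjoint nonempty closed
invariant sets `K i`: orbit closures of minimal points chosen one after another outside the
union of the previous ones, which transitivity prevents from ever covering the space. Any
open `U` meets every neighbourhood of every `K i` along a syndetic set of times; extending the
window by the gap of the next syndetic set lets one find a single time `m` at which, for
each `i`, some point of `U` stays `δ`-close to `K i` during `[m, m + l]`. Separation of the
`K i` then gives the sensitivity, even along the whole of `ℕ`. -/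

open Function

theorem Syndetic.of_forall_exists_near {A B : Set ℕ} (hA : Syndetic A) (N : ℕ)
    (h : ∀ m ∈ A, ∃ j ∈ B, m ≤ j ∧ j ≤ m + N) : Syndetic B := by
  obtain ⟨M, hM⟩ := hA
  refine ⟨M + N, fun k => ?_⟩
  obtain ⟨m, hmA, hkm, hmk⟩ := hM k
  obtain ⟨j, hjB, hmj, hjm⟩ := h m hmA
  exact ⟨j, hjB, by omega, by omega⟩

theorem piecewiseSyndetic_univ : PiecewiseSyndetic Set.univ :=
  ⟨Set.univ, Set.univ, fun _ => ⟨0, Set.subset_univ _⟩,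
    ⟨0, fun k => ⟨k, trivial, le_rfl, by omega⟩⟩, (Set.inter_self _).symm⟩

theorem BlockilyThickly.brokenSensitive {T : X → X} {n : ℕ} (h : BlockilyThickly T n) :
    BrokenSensitive T Fps n := by
  obtain ⟨δ, hδ, hsep⟩ := h
  refine ⟨δ, hδ, Set.univ, piecewiseSyndetic_univ, fun U hU hUne l => ?_⟩
  obtain ⟨x, hxU, m, hm⟩ := hsep l U hU hUne
  exact ⟨x, hxU, m, fun k hk => hm k hk.2.2⟩

theorem exists_pos_le_dist_of_pairwise_disjoint {ι : Type*} [Finite ι] {K : ι → Set X}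
    (hK : ∀ i, IsCompact (K i)) (hdisj : Pairwise (Disjoint on K)) :
    ∃ ε > 0, ∀ i j, i ≠ j → ∀ a ∈ K i, ∀ b ∈ K j, ε ≤ dist a b := by
  have hS : IsCompact (⋃ (i) (j) (_ : i ≠ j), K i ×ˢ K j) :=
    isCompact_iUnion fun i => isCompact_iUnion fun j => isCompact_iUnion fun _ =>
      (hK i).prod (hK j)
  obtain ⟨ε, hε, hle⟩ := hS.exists_forall_le' (a := 0) continuous_dist.continuousOn <| by
    simp only [Set.mem_iUnion, Set.mem_prod]
    rintro ⟨a, b⟩ ⟨i, j, hij, ha, hb⟩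
    exact dist_pos.2 fun hab => (hdisj hij).ne_of_mem ha hb hab
  exact ⟨ε, hε, fun i j hij a ha b hb =>
    hle (a, b) (Set.mem_iUnion₂.2 ⟨i, j, Set.mem_iUnion.2 ⟨hij, ha, hb⟩⟩)⟩

theorem lt_dist_of_mem_thickening {s t : Set X} {ε : ℝ}
    (hst : ∀ a ∈ s, ∀ b ∈ t, ε ≤ dist a b) {y z : X}
    (hy : y ∈ Metric.thickening (ε / 3) s) (hz : z ∈ Metric.thickening (ε / 3) t) :
    ε / 3 < dist y z := by
  obtain ⟨a, ha, hya⟩ := Metric.mem_thickening_iff.1 hy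
  obtain ⟨b, hb, hzb⟩ := Metric.mem_thickening_iff.1 hz
  have := hst a ha b hb
  have := dist_triangle4 a y z b
  rw [dist_comm a y] at this
  linarith

theorem pairwise_disjoint_fin_cons {α : Type*} {n : ℕ} {s : Set α} {K : Fin n → Set α}
    (hs : ∀ i, Disjoint s (K i)) (hK : Pairwise (Disjoint on K)) :
    Pairwise (Disjoint on (Fin.cons s K : Fin (n + 1) → Set α)) := by
  intro i j hij
  induction i using Fin.cases <;> induction j using Fin.cases
  · exact (hij rfl).elim
  · exact hs _
  · exact (hs _).symm
  · exact hK (ne_of_apply_ne Fin.succ hij)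

theorem iUnion_fin_cons {α : Type*} {n : ℕ} (s : Set α) (K : Fin n → Set α) :
    ⋃ i, (Fin.cons s K : Fin (n + 1) → Set α) i = s ∪ ⋃ i, K i := by
  ext
  simp

section Dynamics

variable {T : X → X}

theorem mapsTo_closure_orbit (hT : Continuous T) (x : X) :
    Set.MapsTo T (closure (orbit T x)) (closure (orbit T x)) := by
  refine Set.MapsTo.closure ?_ hT
  rintro _ ⟨k, rfl⟩
  exact ⟨k + 1, Function.iterate_succ_apply' T k x⟩

theorem mem_closure_orbit_self (x : X) : x ∈ closure (orbit T x) :=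
  subset_closure ⟨0, rfl⟩

theorem closure_orbit_subset {S : Set X} (hS : IsClosed S) (hTS : Set.MapsTo T S S) {x : X}
    (hx : x ∈ S) : closure (orbit T x) ⊆ S := by
  refine closure_minimal ?_ hS
  rintro _ ⟨k, rfl⟩
  exact hTS.iterate k hx

theorem MinimalPoint.disjoint_closure_orbit {p : X} (hp : MinimalPoint T p) {S : Set X}
    (hS : IsClosed S) (hTS : Set.MapsTo T S S) (hpS : p ∉ S) :
    Disjoint (closure (orbit T p)) S :=
  Set.disjoint_left.2 fun y hy hyS => hpS (closure_orbit_subset hS hTS hyS (hp y hy))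

theorem MinimalPoint.syndetic_returns [CompactSpace X] (hT : Continuous T) {p : X}
    (hp : MinimalPoint T p) {O : Set X} (hO : IsOpen O) (hpO : p ∈ O) :
    Syndetic {s : ℕ | T^[s] p ∈ O} := by
  have hcover : closure (orbit T p) ⊆ ⋃ s : ℕ, T^[s] ⁻¹' O := by
    intro y hy
    obtain ⟨_, hzO, s, rfl⟩ := mem_closure_iff.1 (hp y hy) O hO hpO
    exact Set.mem_iUnion.2 ⟨s, hzO⟩
  obtain ⟨t, ht⟩ := isClosed_closure.isCompact.elim_finite_subcover _
    (fun s => hO.preimage (hT.iterate s)) hcover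
  refine ⟨t.sup id, fun k => ?_⟩
  obtain ⟨s, hst, hs⟩ := Set.mem_iUnion₂.1 (ht (subset_closure ⟨k, rfl⟩))
  refine ⟨k + s, ?_, Nat.le_add_right k s, Nat.add_le_add_left (Finset.le_sup (f := id) hst) k⟩
  show T^[k + s] p ∈ O
  rwa [add_comm, Function.iterate_add_apply]

theorem IsTransitiveSys.topologicallyErgodic [CompactSpace X] (hT : Continuous T)
    (htr : IsTransitiveSys T) (hdense : Dense {x : X | MinimalPoint T x}) :
    TopologicallyErgodic T := by
  intro U V hU hUne hV hVne
  obtain ⟨t, htVU⟩ := (htr V U hV hVne hU hUne).nonempty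
  have hO : IsOpen (V ∩ T^[t] ⁻¹' U) := hV.inter (hU.preimage (hT.iterate t))
  obtain ⟨p, hp, hpV, hpU⟩ := hdense.exists_mem_open hO htVU
  refine (hp.syndetic_returns hT hO ⟨hpV, hpU⟩).of_forall_exists_near t fun s hs =>
    ⟨s + t, ⟨p, ?_, hpV⟩, Nat.le_add_right s t, le_rfl⟩
  rw [Set.mem_preimage, add_comm, Function.iterate_add_apply]
  exact hs.2

theorem IsTransitiveSys.union_ne_univ (htr : IsTransitiveSys T) {A B : Set X}
    (hA : IsClosed A) (hB : IsClosed B) (hAne : A.Nonempty) (hBne : B.Nonempty)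
    (hTA : Set.MapsTo T A A) (hAB : Disjoint A B) : A ∪ B ≠ Set.univ := by
  intro hcover
  have hBc : Bᶜ ⊆ A := fun x hx =>
    (hcover.symm ▸ Set.mem_univ x : x ∈ A ∪ B).resolve_right hx
  obtain ⟨m, x, hx, hmx⟩ := (htr Bᶜ Aᶜ hB.isOpen_compl (hAne.mono hAB.subset_compl_right)
    hA.isOpen_compl (hBne.mono hAB.subset_compl_left)).nonempty
  exact hmx (hTA.iterate m (hBc hx))

theorem TopologicallyErgodic.syndetic_forall_exists_iterate_mem
    (herg : TopologicallyErgodic T) (hT : Continuous T) {U : Set X} (hU : IsOpen U)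
    (hUne : U.Nonempty) {ι : Type*} {G : ι → Set X} (hG : ∀ i, IsOpen (G i))
    (horb : ∀ i, ∃ y, ∀ t, T^[t] y ∈ G i) (s : Finset ι) (L : ℕ) :
    Syndetic {m : ℕ | ∀ i ∈ s, ∃ x ∈ U, ∀ t ≤ L, T^[m + t] x ∈ G i} := by
  classical
  induction s using Finset.induction_on generalizing L with
  | empty => exact ⟨0, fun k => ⟨k, by simp, le_rfl, by omega⟩⟩
  | insert a s _ ih =>
    set W := ⋂ t ∈ Set.Iic L, T^[t] ⁻¹' G a
    have hW : IsOpen W :=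
      (Set.finite_Iic L).isOpen_biInter fun t _ => (hG a).preimage (hT.iterate t)
    have hWne : W.Nonempty := by
      obtain ⟨y, hy⟩ := horb a
      exact ⟨y, Set.mem_iInter₂.2 fun t _ => hy t⟩
    obtain ⟨N, hN⟩ := herg W U hW hWne hU hUne
    -- a window `[j, j + L]` with `m ≤ j ≤ m + N` lies inside `[m, m + (L + N)]`
    refine (ih (L + N)).of_forall_exists_near N fun m hm => ?_
    obtain ⟨j, ⟨x, hxW, hxU⟩, hmj, hjm⟩ := hN m
    refine ⟨j, fun i hi => ?_, hmj, hjm⟩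
    rcases Finset.mem_insert.1 hi with rfl | hi
    · refine ⟨x, hxU, fun t ht => ?_⟩
      rw [add_comm, Function.iterate_add_apply]
      exact Set.mem_iInter₂.1 hxW t ht
    · obtain ⟨x, hxU, hx⟩ := hm i hi
      refine ⟨x, hxU, fun t ht => ?_⟩
      rw [show j + t = m + (j - m + t) by omega]
      exact hx _ (by omega)

theorem TopologicallyErgodic.blockilyThickly [CompactSpace X] (herg : TopologicallyErgodic T)
    (hT : Continuous T) {n : ℕ} {K : Fin n → Set X} (hK : ∀ i, IsClosed (K i))
    (hKne : ∀ i, (K i).Nonempty) (hTK : ∀ i, Set.MapsTo T (K i) (K i))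
    (hdisj : Pairwise (Disjoint on K)) : BlockilyThickly T n := by
  obtain ⟨ε, hε, hsep⟩ :=
    exists_pos_le_dist_of_pairwise_disjoint (fun i => (hK i).isCompact) hdisj
  refine ⟨ε / 3, by positivity, fun k U hU hUne => ?_⟩
  have horb : ∀ i, ∃ y, ∀ t, T^[t] y ∈ Metric.thickening (ε / 3) (K i) := fun i =>
    let ⟨y, hy⟩ := hKne i
    ⟨y, fun t => Metric.self_subset_thickening (by positivity) _ ((hTK i).iterate t hy)⟩
  obtain ⟨N, hN⟩ := herg.syndetic_forall_exists_iterate_mem hT hU hUne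
    (fun _ => Metric.isOpen_thickening) horb Finset.univ k
  obtain ⟨m, hm, -⟩ := hN 0
  choose x hxU hx using fun i => hm i (Finset.mem_univ i)
  exact ⟨x, hxU, m, fun l hl i j hij =>
    lt_dist_of_mem_thickening (hsep i j hij) (hx i l hl) (hx j l hl)⟩

theorem exists_pairwise_disjoint_closed_invariant (hT : Continuous T)
    (htr : IsTransitiveSys T) (hdense : Dense {x : X | MinimalPoint T x})
    (hnm : ¬ MinimalSys T) (r : ℕ) :
    ∃ K : Fin (r + 1) → Set X,
      (∀ i, IsClosed (K i) ∧ (K i).Nonempty ∧ Set.MapsTo T (K i) (K i)) ∧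
        Pairwise (Disjoint on K) ∧ (⋃ i, K i) ≠ Set.univ := by
  induction r with
  | zero =>
    obtain ⟨x₀, hx₀⟩ := not_forall.1 hnm
    refine ⟨fun _ => closure (orbit T x₀), fun _ => ⟨isClosed_closure,
      ⟨x₀, mem_closure_orbit_self x₀⟩, mapsTo_closure_orbit hT x₀⟩,
      fun i j hij => (hij (Subsingleton.elim (α := Fin 1) i j)).elim, ?_⟩
    rw [Set.iUnion_const]
    exact fun h => hx₀ (dense_iff_closure_eq.2 h)
  | succ r ih =>
    obtain ⟨K, hK, hdisj, hcover⟩ := ih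
    have hUcl : IsClosed (⋃ i, K i) := isClosed_iUnion_of_finite fun i => (hK i).1
    have hUmaps : Set.MapsTo T (⋃ i, K i) (⋃ i, K i) :=
      Set.mapsTo_iUnion_iUnion fun i => (hK i).2.2
    obtain ⟨p, hp, hpK⟩ :=
      hdense.exists_mem_open hUcl.isOpen_compl (Set.nonempty_compl.2 hcover)
    have hpdisj := hp.disjoint_closure_orbit hUcl hUmaps hpK
    refine ⟨Fin.cons (closure (orbit T p)) K, ?_, ?_, ?_⟩
    · refine Fin.cases ⟨isClosed_closure, ⟨p, mem_closure_orbit_self p⟩,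
        mapsTo_closure_orbit hT p⟩ fun i => ?_
      simpa only [Fin.cons_succ] using hK i
    · exact pairwise_disjoint_fin_cons (Set.disjoint_iUnion_right.1 hpdisj) hdisj
    · rw [iUnion_fin_cons, Set.union_comm]
      exact htr.union_ne_univ hUcl isClosed_closure
        ((hK 0).2.1.mono (Set.subset_iUnion K 0)) ⟨p, mem_closure_orbit_self p⟩ hUmaps
        hpdisj.symm

end Dynamics

theorem stmt10_general [CompactSpace X] (T : X → X) (hT : Continuous T)
    (htr : IsTransitiveSys T) (hdense : Dense {x : X | MinimalPoint T x})
    (hnm : ¬ MinimalSys T) :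
    ∀ n : ℕ, 2 ≤ n → BrokenSensitive T Fps n := by
  intro n hn
  obtain ⟨r, rfl⟩ : ∃ r, n = r + 1 := ⟨n - 1, by omega⟩
  obtain ⟨K, hK, hdisj, -⟩ := exists_pairwise_disjoint_closed_invariant hT htr hdense hnm r
  exact ((htr.topologicallyErgodic hT hdense).blockilyThickly hT (fun i => (hK i).1)
    (fun i => (hK i).2.1) (fun i => (hK i).2.2) hdisj).brokenSensitive

theorem stmt10 [CompactSpace X] (T : X → X) (hT : Continuous T) (hTs : Function.Surjective T)
    (htr : IsTransitiveSys T) (hdense : Dense {x : X | MinimalPoint T x})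
    (hnm : ¬ MinimalSys T) :
    ∀ n : ℕ, 2 ≤ n → BrokenSensitive T Fps n :=
  stmt10_general T hT htr hdense hnm
end
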